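/- arXiv:2602.21501 — 2 statements merged into one kernel-verified Lean document; each statement's English description precedes it below -/
import Mathlib

section
/- Rademacher complexity of self-normalized classes: in the setting of the context, let F be a nonempty countable star-shaped class of measurable functions with sup_{f∈F}‖f‖_∞ ≤ M < ∞, and fix δ > 0. Then E[ sup_{f∈F} (1/n)∑_{i=1}^n εᵢ f(Zᵢ) / max(‖f‖, δ) ] ≤ (2/δ)·𝔯ₙ(F, δ). -/
/-!
Rescaling `f ∈ F` by `δ / max(‖f‖, δ) ∈ [0, 1]` keeps it in the star-shaped class `F` and moves it
into the ball `‖·‖ ≤ δ`; since both the empirical Rademacher sum and the norm are positively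
homogeneous, the self-normalized supremum is exactly `δ⁻¹` times the localized one, pointwise in
the sample. Hence the left side equals `𝔯ₙ(F, δ) / δ`, and `𝔯ₙ(F, δ) ≥ 0` because a
star-shaped class is empty or contains `0`.
-/

open MeasureTheory ProbabilityTheory

/-- The `L²(P)` norm `‖g‖ = (∫ g² dP)^{1/2}`. -/
noncomputable def l2norm {𝒵 : Type*} [MeasurableSpace 𝒵] (P : Measure 𝒵) (g : 𝒵 → ℝ) : ℝ :=
  Real.sqrt (∫ z, g z ^ 2 ∂P)

/-- The symmetrized empirical sum `(1/n) ∑ᵢ εᵢ g(Zᵢ)` at sample point `ω`. -/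
noncomputable def radSum {𝒵 Ω : Type*} {n : ℕ} (Z : Fin n → Ω → 𝒵) (ε : Fin n → Ω → ℝ)
    (g : 𝒵 → ℝ) (ω : Ω) : ℝ :=
  (n : ℝ)⁻¹ * ∑ i : Fin n, ε i ω * g (Z i ω)

/-- Localized Rademacher complexity
`𝔯ₙ(𝒢, δ) = E[sup {(1/n) ∑ᵢ εᵢ g(Zᵢ) : g ∈ 𝒢, ‖g‖ ≤ δ}]` (sup over ∅ taken to be 0). -/
noncomputable def locRad {𝒵 Ω : Type*} [MeasurableSpace 𝒵] [MeasurableSpace Ω]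
    (μ : Measure Ω) (P : Measure 𝒵) {n : ℕ} (Z : Fin n → Ω → 𝒵) (ε : Fin n → Ω → ℝ)
    (𝒢 : Set (𝒵 → ℝ)) (δ : ℝ) : ℝ :=
  ∫ ω, sSup ((fun g => radSum Z ε g ω) '' {g ∈ 𝒢 | l2norm P g ≤ δ}) ∂μ

/-- A class of functions is star-shaped about `0` if it is closed under scaling by `t ∈ [0,1]`. -/
def StarShaped {𝒵 : Type*} (𝒢 : Set (𝒵 → ℝ)) : Prop :=
  ∀ g ∈ 𝒢, ∀ t : ℝ, 0 ≤ t → t ≤ 1 → (fun z => t * g z) ∈ 𝒢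

open Pointwise

lemma l2norm_const_mul {𝒵 : Type*} [MeasurableSpace 𝒵] (P : Measure 𝒵) (g : 𝒵 → ℝ)
    {c : ℝ} (hc : 0 ≤ c) : l2norm P (fun z => c * g z) = c * l2norm P g := by
  simp only [l2norm, mul_pow, integral_const_mul, Real.sqrt_mul (sq_nonneg c), Real.sqrt_sq hc]

lemma radSum_const_mul {𝒵 Ω : Type*} {n : ℕ} (Z : Fin n → Ω → 𝒵) (ε : Fin n → Ω → ℝ)
    (g : 𝒵 → ℝ) (c : ℝ) (ω : Ω) :
    radSum Z ε (fun z => c * g z) ω = c * radSum Z ε g ω := by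
  simp only [radSum, Finset.mul_sum]
  exact Finset.sum_congr rfl fun i _ => by ring

namespace StarShaped

variable {𝒵 : Type*} {F : Set (𝒵 → ℝ)} {φ N : (𝒵 → ℝ) → ℝ}

lemma image_div_max_eq_smul_image (hF : StarShaped F)
    (hφ : ∀ g c, 0 ≤ c → φ (fun z => c * g z) = c * φ g)
    (hN : ∀ g c, 0 ≤ c → N (fun z => c * g z) = c * N g) {δ : ℝ} (hδ : 0 < δ) :
    (fun f => φ f / max (N f) δ) '' F = δ⁻¹ • (φ '' {g ∈ F | N g ≤ δ}) := by
  ext x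
  simp only [Set.mem_image, Set.mem_smul_set, Set.mem_ofPred_eq, smul_eq_mul]
  constructor
  · rintro ⟨f, hf, rfl⟩
    set m := max (N f) δ
    have hm : 0 < m := hδ.trans_le (le_max_right _ _)
    have hc₀ : 0 ≤ δ / m := by positivity
    have hc₁ : δ / m ≤ 1 := (div_le_one hm).2 (le_max_right _ _)
    refine ⟨φ (fun z => δ / m * f z), ⟨_, ⟨hF f hf _ hc₀ hc₁, ?_⟩, rfl⟩, ?_⟩
    · calc N (fun z => δ / m * f z) = δ / m * N f := hN f _ hc₀
        _ ≤ δ / m * m := by gcongr; exact le_max_left _ _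
        _ = δ := div_mul_cancel₀ δ hm.ne'
    · rw [hφ f _ hc₀]
      field_simp
  · rintro ⟨_, ⟨g, ⟨hg, hgδ⟩, rfl⟩, rfl⟩
    exact ⟨g, hg, by rw [max_eq_right hgδ, div_eq_inv_mul]⟩

lemma sSup_image_div_max (hF : StarShaped F)
    (hφ : ∀ g c, 0 ≤ c → φ (fun z => c * g z) = c * φ g)
    (hN : ∀ g c, 0 ≤ c → N (fun z => c * g z) = c * N g) {δ : ℝ} (hδ : 0 < δ) :
    sSup ((fun f => φ f / max (N f) δ) '' F) = δ⁻¹ * sSup (φ '' {g ∈ F | N g ≤ δ}) := by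
  rw [hF.image_div_max_eq_smul_image hφ hN hδ, Real.sSup_smul_of_nonneg (by positivity),
    smul_eq_mul]

lemma sSup_image_nonneg (hF : StarShaped F)
    (hφ : ∀ g c, 0 ≤ c → φ (fun z => c * g z) = c * φ g)
    (hN : ∀ g c, 0 ≤ c → N (fun z => c * g z) = c * N g) {δ : ℝ} (hδ : 0 ≤ δ) :
    0 ≤ sSup (φ '' {g ∈ F | N g ≤ δ}) := by
  rcases F.eq_empty_or_nonempty with rfl | ⟨f, hf⟩
  · simp
  have hzero : (fun z => 0 * f z) ∈ {g ∈ F | N g ≤ δ} :=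
    ⟨hF f hf 0 le_rfl zero_le_one, by rwa [hN f 0 le_rfl, zero_mul]⟩
  exact Real.sSup_nonneg'
    ⟨_, Set.mem_image_of_mem φ hzero, ((hφ f 0 le_rfl).trans (zero_mul _)).ge⟩

end StarShaped

theorem selfNormalized_rademacher_bound_general
    {𝒵 Ω : Type*} [MeasurableSpace 𝒵] [MeasurableSpace Ω]
    (μ : Measure Ω)
    (P : Measure 𝒵)
    {n : ℕ}
    (Z : Fin n → Ω → 𝒵) (ε : Fin n → Ω → ℝ)
    (F : Set (𝒵 → ℝ))
    (hstar : StarShaped F)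
    (δ : ℝ) (hδ : 0 < δ) :
    ∫ ω, sSup ((fun f => radSum Z ε f ω / max (l2norm P f) δ) '' F) ∂μ
      ≤ (2 / δ) * locRad μ P Z ε F δ := by
  have hφ := fun ω g c (_ : (0 : ℝ) ≤ c) => radSum_const_mul Z ε g c ω
  have hN := fun g c (hc : (0 : ℝ) ≤ c) => l2norm_const_mul P g hc
  have hnormalized_eq : ∫ ω, sSup ((fun f => radSum Z ε f ω / max (l2norm P f) δ) '' F) ∂μ
      = δ⁻¹ * locRad μ P Z ε F δ := by
    rw [locRad, ← integral_const_mul]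
    congr 1 with ω
    exact hstar.sSup_image_div_max (hφ ω) hN hδ
  have hlocRad : 0 ≤ locRad μ P Z ε F δ :=
    integral_nonneg fun ω => hstar.sSup_image_nonneg (hφ ω) hN hδ.le
  rw [hnormalized_eq, div_eq_mul_inv]
  nlinarith [inv_nonneg.2 hδ.le]

/-- **Rademacher complexity of self-normalized classes.**
If `F` is a nonempty countable star-shaped class of measurable functions with
`sup_{f∈F} ‖f‖_∞ ≤ M < ∞`, then for every `δ > 0`,
`E[sup_{f∈F} (1/n) ∑ᵢ εᵢ f(Zᵢ)/max(‖f‖, δ)] ≤ (2/δ) ⬝ 𝔯ₙ(F, δ)`. -/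
theorem selfNormalized_rademacher_bound
    {𝒵 Ω : Type*} [MeasurableSpace 𝒵] [MeasurableSpace Ω]
    (μ : Measure Ω) [IsProbabilityMeasure μ]
    (P : Measure 𝒵) [IsProbabilityMeasure P]
    {n : ℕ} (hn : 1 ≤ n)
    (Z : Fin n → Ω → 𝒵) (ε : Fin n → Ω → ℝ)
    (hZmeas : ∀ i, Measurable (Z i)) (hεmeas : ∀ i, Measurable (ε i))
    (hZlaw : ∀ i, μ.map (Z i) = P)
    (hZindep : iIndepFun Z μ)
    (hεlaw : ∀ i, μ.map (ε i)
      = (2⁻¹ : ENNReal) • Measure.dirac (1 : ℝ) + (2⁻¹ : ENNReal) • Measure.dirac (-1 : ℝ))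
    (hεindep : iIndepFun ε μ)
    (hZε : IndepFun (fun ω i => Z i ω) (fun ω i => ε i ω) μ)
    (F : Set (𝒵 → ℝ)) (hFne : F.Nonempty) (hFct : F.Countable)
    (hFmeas : ∀ f ∈ F, Measurable f)
    (hstar : StarShaped F)
    (M : ℝ) (hM : ∀ f ∈ F, ∀ᵐ z ∂P, |f z| ≤ M)
    (δ : ℝ) (hδ : 0 < δ) :
    ∫ ω, sSup ((fun f => radSum Z ε f ω / max (l2norm P f) δ) '' F) ∂μ
      ≤ (2 / δ) * locRad μ P Z ε F δ :=
  selfNormalized_rademacher_bound_general μ P Z ε F hstar δ hδ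
end

section
/- Regret transfer under weight-estimation error: let P be a probability measure on a measurable space 𝒵, F a nonempty set, and ℓ:𝒵×F→ℝ with z ↦ ℓ(z,f) measurable for each f ∈ F. Let w₀, ŵ : 𝒵→ℝ be measurable with w₀(z) ≠ 0 for P-a.e. z, and assume for every f ∈ F that w₀·ℓ(·,f) and ŵ·ℓ(·,f) are P-integrable and that w₀·(ℓ(·,f) − ℓ(·,f₀)) is square P-integrable. Define the weighted risk R(f;w) := ∫w(z)ℓ(z,f)dP(z). Suppose: f₀ ∈ F satisfies R(f₀;w₀) ≤ R(f;w₀) for all f ∈ F; f̂₀ ∈ F satisfies R(f̂₀;ŵ) ≤ R(f;ŵ) for all f ∈ F; the function 1 − ŵ/w₀ is square P-integrable with ε := (∫(1 − ŵ(z)/w₀(z))² dP(z))^{1/2} < 1/2; and there is c ∈ [1,∞) such that Var_P( w₀·(ℓ(·,f) − ℓ(·,f₀)) ) ≤ c·( R(f;w₀) − R(f₀;w₀) ) for all f ∈ F (weighted Bernstein condition). Then R(f̂₀;w₀) − R(f₀;w₀) ≤ 4c²ε². -/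
/-!
Put `g = w₀ (ℓ(·, f̂₀) − ℓ(·, f₀))`, `u = 1 − ŵ/w₀` and `Δ = R(f̂₀; w₀) − R(f₀; w₀) = ∫ g`.
Since `ŵ = (1 − u) w₀` a.e., optimality of `f̂₀` for `ŵ` says `∫ (1 − u) g ≤ 0`, i.e. `Δ ≤ ∫ u g`.
Cauchy–Schwarz and the Bernstein condition give
`Δ ≤ ε ‖g‖₂ = ε √(Var g + Δ²) ≤ ε √(c Δ + Δ²)`,
and solving this quadratic inequality with `ε < 1/2` yields `Δ ≤ (4/3) c ε² ≤ 4 c² ε²`.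
-/

open MeasureTheory ProbabilityTheory

lemma le_four_mul_sq_mul_sq_of_le_mul_sqrt {x ε c : ℝ} (hc : 1 ≤ c) (hε : 0 ≤ ε)
    (hε_lt : ε < 1 / 2) (h : x ≤ ε * √(c * x + x ^ 2)) : x ≤ 4 * c ^ 2 * ε ^ 2 := by
  rcases le_or_gt x 0 with hx | hx
  · nlinarith [sq_nonneg (c * ε)]
  have hsq : x ^ 2 ≤ ε ^ 2 * (c * x + x ^ 2) := by
    calc x ^ 2 ≤ (ε * √(c * x + x ^ 2)) ^ 2 := pow_le_pow_left₀ hx.le h 2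
      _ = ε ^ 2 * (c * x + x ^ 2) := by rw [mul_pow, Real.sq_sqrt (by positivity)]
  have hlin : 3 / 4 * x ≤ c * ε ^ 2 := by
    have hε_sq : ε ^ 2 ≤ 1 / 4 := by nlinarith
    refine le_of_mul_le_mul_right ?_ hx
    nlinarith [mul_le_mul_of_nonneg_right hε_sq (sq_nonneg x)]
  nlinarith

theorem integral_mul_le_sqrt_integral_sq_mul_sqrt_integral_sq {α : Type*} [MeasurableSpace α]
    {μ : Measure α} {f g : α → ℝ}
    (hf : MemLp f 2 μ) (hg : MemLp g 2 μ) :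
    ∫ a, f a * g a ∂μ ≤ √(∫ a, f a ^ 2 ∂μ) * √(∫ a, g a ^ 2 ∂μ) := by
  have h2 : ENNReal.ofReal 2 = 2 := by norm_num
  have hnorm_sq : ∀ x : ℝ, ‖x‖ ^ (2 : ℝ) = x ^ 2 := fun x => by
    rw [Real.rpow_two, Real.norm_eq_abs, sq_abs]
  calc ∫ a, f a * g a ∂μ ≤ ‖∫ a, f a * g a ∂μ‖ := Real.le_norm_self _
    _ ≤ ∫ a, ‖f a‖ * ‖g a‖ ∂μ := by
        simpa only [norm_mul] using norm_integral_le_integral_norm (fun a => f a * g a)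
    _ ≤ (∫ a, ‖f a‖ ^ (2 : ℝ) ∂μ) ^ (1 / 2 : ℝ) * (∫ a, ‖g a‖ ^ (2 : ℝ) ∂μ) ^ (1 / 2 : ℝ) :=
        integral_mul_norm_le_Lp_mul_Lq .two_two (h2 ▸ hf) (h2 ▸ hg)
    _ = √(∫ a, f a ^ 2 ∂μ) * √(∫ a, g a ^ 2 ∂μ) := by
        simp only [hnorm_sq, ← Real.sqrt_eq_rpow]

section Weights

variable {α : Type*} [MeasurableSpace α] {μ : Measure α} {w v a b h : α → ℝ}

lemma integrable_mul_sub (ha : Integrable (fun z => w z * a z) μ)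
    (hb : Integrable (fun z => w z * b z) μ) :
    Integrable (fun z => w z * (a z - b z)) μ := by
  simp only [mul_sub]
  exact ha.sub hb

lemma integral_mul_sub (ha : Integrable (fun z => w z * a z) μ)
    (hb : Integrable (fun z => w z * b z) μ) :
    ∫ z, w z * (a z - b z) ∂μ = ∫ z, w z * a z ∂μ - ∫ z, w z * b z ∂μ := by
  simp only [mul_sub]
  exact integral_sub ha hb

lemma integral_one_sub_div_mul_mul (hw : ∀ᵐ z ∂μ, w z ≠ 0)
    (hwh : Integrable (fun z => w z * h z) μ) (hvh : Integrable (fun z => v z * h z) μ) :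
    ∫ z, (1 - v z / w z) * (w z * h z) ∂μ = ∫ z, w z * h z ∂μ - ∫ z, v z * h z ∂μ := by
  rw [← integral_sub hwh hvh]
  refine integral_congr_ae ?_
  filter_upwards [hw] with z hz
  field_simp

end Weights

theorem integral_le_four_mul_sq_mul_sq_of_variance_le {Ω : Type*} [MeasurableSpace Ω]
    {P : Measure Ω} [IsProbabilityMeasure P] {g u : Ω → ℝ} {c ε : ℝ}
    (hg : MemLp g 2 P) (hu : MemLp u 2 P) (hgu : ∫ z, g z ∂P ≤ ∫ z, u z * g z ∂P)
    (hvar : variance g P ≤ c * ∫ z, g z ∂P) (hc : 1 ≤ c)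
    (hε : √(∫ z, u z ^ 2 ∂P) ≤ ε) (hε_lt : ε < 1 / 2) :
    ∫ z, g z ∂P ≤ 4 * c ^ 2 * ε ^ 2 := by
  have hε_nonneg : 0 ≤ ε := (Real.sqrt_nonneg _).trans hε
  have hsecond_moment : ∫ z, g z ^ 2 ∂P = variance g P + (∫ z, g z ∂P) ^ 2 := by
    rw [variance_eq_sub hg]
    simp only [Pi.pow_apply]
    ring
  refine le_four_mul_sq_mul_sq_of_le_mul_sqrt hc hε_nonneg hε_lt ?_
  calc ∫ z, g z ∂P ≤ ∫ z, u z * g z ∂P := hgu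
    _ ≤ √(∫ z, u z ^ 2 ∂P) * √(∫ z, g z ^ 2 ∂P) :=
        integral_mul_le_sqrt_integral_sq_mul_sqrt_integral_sq hu hg
    _ ≤ ε * √(c * ∫ z, g z ∂P + (∫ z, g z ∂P) ^ 2) := by
        gcongr
        linarith

theorem weighted_erm_regret_transfer_general
    {𝒵 F : Type*} [MeasurableSpace 𝒵]
    (P : Measure 𝒵) [IsProbabilityMeasure P]
    (ℓ : 𝒵 → F → ℝ)
    (w₀ what : 𝒵 → ℝ)
    (hw₀ne : ∀ᵐ z ∂P, w₀ z ≠ 0)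
    (hint₀ : ∀ f : F, Integrable (fun z => w₀ z * ℓ z f) P)
    (hintHat : ∀ f : F, Integrable (fun z => what z * ℓ z f) P)
    (f₀ fhat₀ : F)
    (hsq : ∀ f : F, MemLp (fun z => w₀ z * (ℓ z f - ℓ z f₀)) 2 P)
    (R : F → (𝒵 → ℝ) → ℝ) (hR : ∀ f w, R f w = ∫ z, w z * ℓ z f ∂P)
    (hfhat₀ : ∀ f : F, R fhat₀ what ≤ R f what)
    (hsqErr : MemLp (fun z => 1 - what z / w₀ z) 2 P)
    (ε : ℝ) (hε : ε = Real.sqrt (∫ z, (1 - what z / w₀ z) ^ 2 ∂P)) (hεlt : ε < 1 / 2)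
    (c : ℝ) (hc : 1 ≤ c)
    (hbern : ∀ f : F,
      variance (fun z => w₀ z * (ℓ z f - ℓ z f₀)) P ≤ c * (R f w₀ - R f₀ w₀)) :
    R fhat₀ w₀ - R f₀ w₀ ≤ 4 * c ^ 2 * ε ^ 2 := by
  have hexcess : ∫ z, w₀ z * (ℓ z fhat₀ - ℓ z f₀) ∂P = R fhat₀ w₀ - R f₀ w₀ := by
    rw [hR, hR]
    exact integral_mul_sub (hint₀ _) (hint₀ _)
  have hreweighted : ∫ z, w₀ z * (ℓ z fhat₀ - ℓ z f₀) ∂P ≤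
      ∫ z, (1 - what z / w₀ z) * (w₀ z * (ℓ z fhat₀ - ℓ z f₀)) ∂P := by
    rw [integral_one_sub_div_mul_mul hw₀ne (integrable_mul_sub (hint₀ _) (hint₀ _))
      (integrable_mul_sub (hintHat _) (hintHat _)), integral_mul_sub (hintHat _) (hintHat _),
      ← hR, ← hR]
    linarith [hfhat₀ f₀]
  rw [← hexcess]
  exact integral_le_four_mul_sq_mul_sq_of_variance_le (hsq fhat₀) hsqErr hreweighted
    (hexcess ▸ hbern fhat₀) hc hε.ge hεlt

/-- **Regret transfer under weight-estimation error.**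
With weighted risk `R(f; w) = ∫ w(z) ℓ(z, f) dP(z)`, if `f₀` minimizes `R(·; w₀)`, `f̂₀`
minimizes `R(·; ŵ)`, `ε = ‖1 − ŵ/w₀‖_{L²(P)} < 1/2`, and the weighted Bernstein condition
`Var_P(w₀(ℓ(·,f) − ℓ(·,f₀))) ≤ c (R(f; w₀) − R(f₀; w₀))` holds for all `f ∈ F` with
`c ≥ 1`, then `R(f̂₀; w₀) − R(f₀; w₀) ≤ 4 c² ε²`. -/
theorem weighted_erm_regret_transfer
    {𝒵 F : Type*} [MeasurableSpace 𝒵] [Nonempty F]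
    (P : Measure 𝒵) [IsProbabilityMeasure P]
    (ℓ : 𝒵 → F → ℝ)
    (hmeas : ∀ f : F, Measurable fun z => ℓ z f)
    (w₀ what : 𝒵 → ℝ) (hw₀meas : Measurable w₀) (hwhatmeas : Measurable what)
    (hw₀ne : ∀ᵐ z ∂P, w₀ z ≠ 0)
    (hint₀ : ∀ f : F, Integrable (fun z => w₀ z * ℓ z f) P)
    (hintHat : ∀ f : F, Integrable (fun z => what z * ℓ z f) P)
    (f₀ fhat₀ : F)
    (hsq : ∀ f : F, MemLp (fun z => w₀ z * (ℓ z f - ℓ z f₀)) 2 P)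
    (R : F → (𝒵 → ℝ) → ℝ) (hR : ∀ f w, R f w = ∫ z, w z * ℓ z f ∂P)
    (hf₀ : ∀ f : F, R f₀ w₀ ≤ R f w₀)
    (hfhat₀ : ∀ f : F, R fhat₀ what ≤ R f what)
    (hsqErr : MemLp (fun z => 1 - what z / w₀ z) 2 P)
    (ε : ℝ) (hε : ε = Real.sqrt (∫ z, (1 - what z / w₀ z) ^ 2 ∂P)) (hεlt : ε < 1 / 2)
    (c : ℝ) (hc : 1 ≤ c)
    (hbern : ∀ f : F,
      variance (fun z => w₀ z * (ℓ z f - ℓ z f₀)) P ≤ c * (R f w₀ - R f₀ w₀)) :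
    R fhat₀ w₀ - R f₀ w₀ ≤ 4 * c ^ 2 * ε ^ 2 :=
  weighted_erm_regret_transfer_general P ℓ w₀ what hw₀ne hint₀ hintHat f₀ fhat₀ hsq R hR hfhat₀
    hsqErr ε hε hεlt c hc hbern
end
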